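/- arXiv:0909.0326 — 8 statements merged into one kernel-verified Lean document; each statement's English description precedes it below -/
import Mathlib

section
/- Every Hom-alternative algebra is Hom-flexible, i.e., as_α(x,y,x) = 0 for all x, y, equivalently μ(α(x), μ(y,x)) = μ(μ(x,y), α(x)). -/
/-! Linearizing the right identity shows that the Hom-associator is skew in its last two
arguments, so `as_α(x, y, x) = -as_α(x, x, y)`, which vanishes by the left identity. -/

section HomAssociator

variable {R V : Type*} [CommSemiring R] [AddCommGroup V] [Module R V]
  (μ : V →ₗ[R] V →ₗ[R] V) (α : V →ₗ[R] V)

def homAssociator (x y z : V) : V :=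
  μ (α x) (μ y z) - μ (μ x y) (α z)

theorem homAssociator_eq_neg_swap_of_right_alternative
    (hr : ∀ x y : V, μ (α x) (μ y y) = μ (μ x y) (α y)) (x y z : V) :
    homAssociator μ α x y z = -homAssociator μ α x z y := by
  have h := hr x (y + z)
  simp only [map_add, LinearMap.add_apply] at h
  unfold homAssociator
  linear_combination (norm := module) h - hr x y - hr x z

end HomAssociator

theorem hom_alternative_is_hom_flexible_general
    {K V : Type*} [Field K] [AddCommGroup V] [Module K V]
    (μ : V →ₗ[K] V →ₗ[K] V) (α : V →ₗ[K] V)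
    (hl : ∀ x y : V, μ (α x) (μ x y) = μ (μ x x) (α y))
    (hr : ∀ x y : V, μ (α x) (μ y y) = μ (μ x y) (α y)) :
    ∀ x y : V,
      μ (α x) (μ y x) - μ (μ x y) (α x) = 0 ∧ μ (α x) (μ y x) = μ (μ x y) (α x) := by
  intro x y
  have flexible : homAssociator μ α x y x = 0 := by
    rw [homAssociator_eq_neg_swap_of_right_alternative μ α hr, homAssociator,
      sub_eq_zero.mpr (hl x y), neg_zero]
  exact ⟨flexible, sub_eq_zero.mp flexible⟩

/-- Every Hom-alternative algebra is Hom-flexible. -/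
theorem hom_alternative_is_hom_flexible
    {K V : Type*} [Field K] [CharZero K] [AddCommGroup V] [Module K V]
    (μ : V →ₗ[K] V →ₗ[K] V) (α : V →ₗ[K] V)
    (hl : ∀ x y : V, μ (α x) (μ x y) = μ (μ x x) (α y))
    (hr : ∀ x y : V, μ (α x) (μ y y) = μ (μ x y) (α y)) :
    ∀ x y : V,
      μ (α x) (μ y x) - μ (μ x y) (α x) = 0 ∧ μ (α x) (μ y x) = μ (μ x y) (α x) :=
  hom_alternative_is_hom_flexible_general μ α hl hr
end

section
/- In a Hom-alternative algebra, if x and y anticommute (μ(x,y) = −μ(y,x)), then μ(α(x), μ(y,z)) = −μ(α(y), μ(x,z)) for all z. -/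
theorem hom_left_alternative_linearized {R V : Type*} [CommSemiring R] [AddCommGroup V] [Module R V]
    (μ : V →ₗ[R] V →ₗ[R] V) (α : V →ₗ[R] V)
    (hl : ∀ x y : V, μ (α x) (μ x y) = μ (μ x x) (α y)) (x y z : V) :
    μ (α x) (μ y z) + μ (α y) (μ x z) = μ (μ x y + μ y x) (α z) := by
  have h := hl (x + y) z
  simp only [map_add, LinearMap.add_apply, hl x z, hl y z] at h ⊢
  linear_combination (norm := abel) h

theorem hom_alternative_anticommute_left_general
    {K V : Type*} [Field K] [AddCommGroup V] [Module K V]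
    (μ : V →ₗ[K] V →ₗ[K] V) (α : V →ₗ[K] V)
    (hl : ∀ x y : V, μ (α x) (μ x y) = μ (μ x x) (α y))
    (x y : V) (hxy : μ x y = -μ y x) :
    ∀ z : V, μ (α x) (μ y z) = -μ (α y) (μ x z) := by
  intro z
  have h := hom_left_alternative_linearized μ α hl x y z
  rw [hxy, neg_add_cancel, map_zero, LinearMap.zero_apply] at h
  exact eq_neg_of_add_eq_zero_left h

/-- In a Hom-alternative algebra, anticommuting elements satisfy
μ(α(x), μ(y,z)) = −μ(α(y), μ(x,z)). -/
theorem hom_alternative_anticommute_left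
    {K V : Type*} [Field K] [CharZero K] [AddCommGroup V] [Module K V]
    (μ : V →ₗ[K] V →ₗ[K] V) (α : V →ₗ[K] V)
    (hl : ∀ x y : V, μ (α x) (μ x y) = μ (μ x x) (α y))
    (hr : ∀ x y : V, μ (α x) (μ y y) = μ (μ x y) (α y))
    (x y : V) (hxy : μ x y = -μ y x) :
    ∀ z : V, μ (α x) (μ y z) = -μ (α y) (μ x z) :=
  hom_alternative_anticommute_left_general μ α hl x y hxy
end

section
/- In a Hom-alternative algebra, if x and y anticommute (μ(x,y) = −μ(y,x)), then μ(μ(z,x), α(y)) = −μ(μ(z,y), α(x)) for all z. -/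
/-! Polarizing the right Hom-alternative identity at `y := x + y` gives
`μ(α z, μ(x, y) + μ(y, x)) = μ(μ(z, x), α y) + μ(μ(z, y), α x)`;
for anticommuting `x, y` the left side vanishes. -/

theorem hom_right_alternative_polarized {R V : Type*} [CommSemiring R] [AddCommGroup V]
    [Module R V] (μ : V →ₗ[R] V →ₗ[R] V) (α : V →ₗ[R] V)
    (hr : ∀ x y : V, μ (α x) (μ y y) = μ (μ x y) (α y)) (x y z : V) :
    μ (α z) (μ x y + μ y x) = μ (μ z x) (α y) + μ (μ z y) (α x) := by
  have hsum := hr z (x + y)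
  simp only [map_add, LinearMap.add_apply, ← hr z x, ← hr z y] at hsum
  rw [map_add]
  linear_combination (norm := abel) hsum

theorem hom_alternative_anticommute_right_general
    {K V : Type*} [Field K] [AddCommGroup V] [Module K V]
    (μ : V →ₗ[K] V →ₗ[K] V) (α : V →ₗ[K] V)
    (hr : ∀ x y : V, μ (α x) (μ y y) = μ (μ x y) (α y))
    (x y : V) (hxy : μ x y = -μ y x) :
    ∀ z : V, μ (μ z x) (α y) = -μ (μ z y) (α x) := by
  intro z
  have hpol := hom_right_alternative_polarized μ α hr x y z
  rw [hxy, neg_add_cancel, map_zero] at hpol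
  exact eq_neg_of_add_eq_zero_left hpol.symm

/-- In a Hom-alternative algebra, anticommuting elements satisfy
μ(μ(z,x), α(y)) = −μ(μ(z,y), α(x)). -/
theorem hom_alternative_anticommute_right
    {K V : Type*} [Field K] [CharZero K] [AddCommGroup V] [Module K V]
    (μ : V →ₗ[K] V →ₗ[K] V) (α : V →ₗ[K] V)
    (hl : ∀ x y : V, μ (α x) (μ x y) = μ (μ x x) (α y))
    (hr : ∀ x y : V, μ (α x) (μ y y) = μ (μ x y) (α y))
    (x y : V) (hxy : μ x y = -μ y x) :
    ∀ z : V, μ (μ z x) (α y) = -μ (μ z y) (α x) :=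
  hom_alternative_anticommute_right_general μ α hr x y hxy
end

section
/- Let (V, μ) be a left alternative algebra (μ(x, μ(x,y)) = μ(μ(x,x), y)) and α: V → V an algebra endomorphism (α linear with α(μ(x,y)) = μ(α(x), α(y))). Then (V, μ_α, α), where μ_α = α ∘ μ, is a left Hom-alternative algebra: μ_α(α(x), μ_α(x,y)) = μ_α(μ_α(x,x), α(y)). -/
theorem twist_left_alternative_general
    {K V : Type*} [Field K] [AddCommGroup V] [Module K V]
    (μ : V →ₗ[K] V →ₗ[K] V) (α : V →ₗ[K] V)
    (hα : ∀ x y : V, α (μ x y) = μ (α x) (α y))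
    (hl : ∀ x y : V, μ x (μ x y) = μ (μ x x) y) :
    ∀ x y : V, α (μ (α x) (α (μ x y))) = α (μ (α (μ x x)) (α y)) := by
  intro x y
  calc α (μ (α x) (α (μ x y))) = α (α (μ x (μ x y))) := by rw [← hα]
    _ = α (α (μ (μ x x) y)) := by rw [hl]
    _ = α (μ (α (μ x x)) (α y)) := by rw [hα (μ x x)]

/-- Twisting a left alternative algebra by an endomorphism yields a left
Hom-alternative algebra. -/
theorem twist_left_alternative
    {K V : Type*} [Field K] [CharZero K] [AddCommGroup V] [Module K V]
    (μ : V →ₗ[K] V →ₗ[K] V) (α : V →ₗ[K] V)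
    (hα : ∀ x y : V, α (μ x y) = μ (α x) (α y))
    (hl : ∀ x y : V, μ x (μ x y) = μ (μ x x) y) :
    ∀ x y : V, α (μ (α x) (α (μ x y))) = α (μ (α (μ x x)) (α y)) :=
  twist_left_alternative_general μ α hα hl
end

section
/- Let (V, μ) be a right alternative algebra (μ(μ(x,y), y) = μ(x, μ(y,y))) and α: V → V an algebra endomorphism. Then (V, μ_α, α), where μ_α = α ∘ μ, is a right Hom-alternative algebra: μ_α(α(x), μ_α(y,y)) = μ_α(μ_α(x,y), α(y)). -/
theorem twist_right_alternative_general
    {K V : Type*} [Field K] [AddCommGroup V] [Module K V]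
    (μ : V →ₗ[K] V →ₗ[K] V) (α : V →ₗ[K] V)
    (hα : ∀ x y : V, α (μ x y) = μ (α x) (α y))
    (hr : ∀ x y : V, μ (μ x y) y = μ x (μ y y)) :
    ∀ x y : V, α (μ (α x) (α (μ y y))) = α (μ (α (μ x y)) (α y)) := by
  intro x y
  calc α (μ (α x) (α (μ y y))) = α (α (μ x (μ y y))) := by rw [hα x]
    _ = α (α (μ (μ x y) y)) := by rw [hr]
    _ = α (μ (α (μ x y)) (α y)) := by rw [hα (μ x y) y]

/-- Twisting a right alternative algebra by an endomorphism yields a right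
Hom-alternative algebra. -/
theorem twist_right_alternative
    {K V : Type*} [Field K] [CharZero K] [AddCommGroup V] [Module K V]
    (μ : V →ₗ[K] V →ₗ[K] V) (α : V →ₗ[K] V)
    (hα : ∀ x y : V, α (μ x y) = μ (α x) (α y))
    (hr : ∀ x y : V, μ (μ x y) y = μ x (μ y y)) :
    ∀ x y : V, α (μ (α x) (α (μ y y))) = α (μ (α (μ x y)) (α y)) :=
  twist_right_alternative_general μ α hα hr
end

section
/- Let (V, m, α) be a Hom-associative algebra: m(α(x), m(y,z)) = m(m(x,y), α(z)). Define μ(x,y) = (1/2)(m(x,y) + m(y,x)). Then (V, μ, α) is a Hom-Jordan algebra: μ is commutative and μ(α²(x), μ(y, μ(x,x))) = μ(μ(α(x), y), α(μ(x,x))) for all x, y. -/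
namespace LinearMap

variable {R M : Type*} [CommSemiring R] [AddCommMonoid M] [Module R M]

def IsHomAssociative (m : M →ₗ[R] M →ₗ[R] M) (α : M →ₗ[R] M) : Prop :=
  ∀ x y z, m (α x) (m y z) = m (m x y) (α z)

def IsHomJordan (μ : M →ₗ[R] M →ₗ[R] M) (α : M →ₗ[R] M) : Prop :=
  ∀ x y, μ (α (α x)) (μ y (μ x x)) = μ (μ (α x) y) (α (μ x x))

variable {m μ : M →ₗ[R] M →ₗ[R] M} {α : M →ₗ[R] M}

theorem IsHomAssociative.map_commutes_sq (h : IsHomAssociative m α) (x : M) :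
    m (α x) (m x x) = m (m x x) (α x) :=
  h x x x

/-- After expanding the anticommutator, each term on one side is matched with one on the other
by a single Hom-associativity step, using `map_commutes_sq` where `α x` meets `m x x`. -/
theorem IsHomAssociative.isHomJordan_add_flip (h : IsHomAssociative m α) :
    IsHomJordan (m + m.flip) α := by
  intro x y
  have e1 : m (α (α x)) (m y (m x x)) = m (m (α x) y) (α (m x x)) := h (α x) y (m x x)
  have e2 : m (α (α x)) (m (m x x) y) = m (m (m x x) (α x)) (α y) := by
    rw [h (α x) (m x x) y, h.map_commutes_sq]
  have e3 : m (m y (m x x)) (α (α x)) = m (α y) (m (m x x) (α x)) := (h y (m x x) (α x)).symm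
  have e4 : m (m (m x x) y) (α (α x)) = m (α (m x x)) (m y (α x)) := (h (m x x) y (α x)).symm
  have e5 : m (m y (α x)) (α (m x x)) = m (α y) (m (α x) (m x x)) := (h y (α x) (m x x)).symm
  have e6 : m (α (m x x)) (m (α x) y) = m (m (m x x) (α x)) (α y) := h (m x x) (α x) y
  simp only [add_apply, flip_apply, map_add]
  rw [e1, e2, e3, e4, e5, e6, h.map_commutes_sq]
  abel

theorem IsHomJordan.smul (h : IsHomJordan μ α) (c : R) : IsHomJordan (c • μ) α := by
  intro x y
  simp only [smul_apply, map_smul, smul_smul, mul_assoc, h x y]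

end LinearMap

theorem hom_associative_polarization_hom_jordan_general
    {K V : Type*} [Field K] [AddCommGroup V] [Module K V]
    (m : V →ₗ[K] V →ₗ[K] V) (α : V →ₗ[K] V)
    (hassoc : ∀ x y z : V, m (α x) (m y z) = m (m x y) (α z))
    (μ : V → V → V)
    (hμ : ∀ x y : V, μ x y = (1/2 : K) • (m x y + m y x)) :
    (∀ x y : V, μ x y = μ y x) ∧
    (∀ x y : V, μ (α (α x)) (μ y (μ x x)) = μ (μ (α x) y) (α (μ x x))) := by
  refine ⟨fun x y => by rw [hμ, hμ, add_comm], ?_⟩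
  have hμ_eq : μ = fun x y => ((1/2 : K) • (m + m.flip)) x y := by
    ext x y
    simp [hμ]
  subst hμ_eq
  exact (LinearMap.IsHomAssociative.isHomJordan_add_flip hassoc).smul _

/-- Polarization of a Hom-associative algebra is a Hom-Jordan algebra. -/
theorem hom_associative_polarization_hom_jordan
    {K V : Type*} [Field K] [CharZero K] [AddCommGroup V] [Module K V]
    (m : V →ₗ[K] V →ₗ[K] V) (α : V →ₗ[K] V)
    (hα : ∀ x y : V, α (m x y) = m (α x) (α y))
    (hassoc : ∀ x y z : V, m (α x) (m y z) = m (m x y) (α z))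
    (μ : V → V → V)
    (hμ : ∀ x y : V, μ x y = (1/2 : K) • (m x y + m y x)) :
    (∀ x y : V, μ x y = μ y x) ∧
    (∀ x y : V, μ (α (α x)) (μ y (μ x x)) = μ (μ (α x) y) (α (μ x x))) :=
  hom_associative_polarization_hom_jordan_general m α hassoc μ hμ
end

section
/- Let (V, μ) be a Jordan algebra (μ commutative with μ(μ(x,y), μ(x,x)) = μ(x, μ(y, μ(x,x)))) and α: V → V an algebra endomorphism. Then (V, μ_α, α) with μ_α = α ∘ μ is a Hom-Jordan algebra: μ_α is commutative and μ_α(α²(x), μ_α(y, μ_α(x,x))) = μ_α(μ_α(α(x), y), α(μ_α(x,x))). -/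
theorem twist_jordan_general
    {K V : Type*} [Field K] [AddCommGroup V] [Module K V]
    (μ : V →ₗ[K] V →ₗ[K] V) (α : V →ₗ[K] V)
    (hcomm : ∀ x y : V, μ x y = μ y x)
    (hJ : ∀ x y : V, μ (μ x y) (μ x x) = μ x (μ y (μ x x)))
    (hα : ∀ x y : V, α (μ x y) = μ (α x) (α y)) :
    (∀ x y : V, α (μ x y) = α (μ y x)) ∧
    (∀ x y : V,
      α (μ (α (α x)) (α (μ y (α (μ x x)))))
        = α (μ (α (μ (α x) y)) (α (α (μ x x))))) := by
  refine ⟨fun x y => by rw [hcomm], fun x y => ?_⟩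
  -- pushing α inside turns both sides into the Jordan identity at α³ x and α² y
  simp only [hα]
  exact (hJ _ _).symm

/-- Twisting a Jordan algebra by an endomorphism yields a Hom-Jordan algebra. -/
theorem twist_jordan
    {K V : Type*} [Field K] [CharZero K] [AddCommGroup V] [Module K V]
    (μ : V →ₗ[K] V →ₗ[K] V) (α : V →ₗ[K] V)
    (hcomm : ∀ x y : V, μ x y = μ y x)
    (hJ : ∀ x y : V, μ (μ x y) (μ x x) = μ x (μ y (μ x x)))
    (hα : ∀ x y : V, α (μ x y) = μ (α x) (α y)) :
    (∀ x y : V, α (μ x y) = α (μ y x)) ∧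
    (∀ x y : V,
      α (μ (α (α x)) (α (μ y (α (μ x x)))))
        = α (μ (α (μ (α x) y)) (α (α (μ x x))))) :=
  twist_jordan_general μ α hcomm hJ hα
end

section
/- With the multiplication μ of the previous 3-dimensional Hom-associative example, if a ≠ b and b ≠ 0 then μ is not associative; specifically μ(μ(e₁,e₁), e₃) − μ(e₁, μ(e₁,e₃)) = (a−b)·b·e₃ ≠ 0. -/
/-! The associator `(e₁e₁)e₃ - e₁(e₁e₃)` is `(ab - b²) e₃`, because `e₁e₁ = a e₁` and
`e₁e₃ = b e₃` while the product is bilinear. -/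

/-- The explicit bilinear multiplication of the 3-dimensional example. -/
def exMul {K : Type*} [Field K] (a b : K) (x y : Fin 3 → K) : Fin 3 → K :=
  ![a * (x 0 * y 0),
    a * (x 0 * y 1 + x 1 * y 0 + x 1 * y 1),
    b * (x 0 * y 2 + x 2 * y 0 + x 1 * y 2)]

section exMul

variable {K : Type*} [Field K] (a b : K)

theorem exMul_smul_left (c : K) (x y : Fin 3 → K) :
    exMul a b (c • x) y = c • exMul a b x y := by
  funext i
  fin_cases i <;> simp [exMul] <;> ring

theorem exMul_smul_right (c : K) (x y : Fin 3 → K) :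
    exMul a b x (c • y) = c • exMul a b x y := by
  funext i
  fin_cases i <;> simp [exMul] <;> ring

theorem exMul_e₁_e₁ : exMul a b ![1, 0, 0] ![1, 0, 0] = a • ![1, 0, 0] := by
  funext i
  fin_cases i <;> simp [exMul]

theorem exMul_e₁_e₃ : exMul a b ![1, 0, 0] ![0, 0, 1] = b • ![0, 0, 1] := by
  funext i
  fin_cases i <;> simp [exMul]

end exMul

theorem example_not_associative_general {K : Type*} [Field K] (a b : K)
    (hab : a ≠ b) (hb : b ≠ 0) :
    exMul a b (exMul a b ![1, 0, 0] ![1, 0, 0]) ![0, 0, 1]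
      - exMul a b ![1, 0, 0] (exMul a b ![1, 0, 0] ![0, 0, 1])
      = ((a - b) * b) • (![0, 0, 1] : Fin 3 → K) ∧
    ((a - b) * b) • (![0, 0, 1] : Fin 3 → K) ≠ 0 := by
  refine ⟨?_, smul_ne_zero (mul_ne_zero (sub_ne_zero.mpr hab) hb) ?_⟩
  · rw [exMul_e₁_e₁, exMul_e₁_e₃, exMul_smul_left, exMul_smul_right, exMul_e₁_e₃,
      smul_smul, smul_smul, ← sub_smul, sub_mul]
  · intro h
    simpa using congrFun h 2

/-- The multiplication of the 3-dimensional example is not associative when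
a ≠ b and b ≠ 0. -/
theorem example_not_associative {K : Type*} [Field K] [CharZero K] (a b : K)
    (hab : a ≠ b) (hb : b ≠ 0) :
    exMul a b (exMul a b ![1, 0, 0] ![1, 0, 0]) ![0, 0, 1]
      - exMul a b ![1, 0, 0] (exMul a b ![1, 0, 0] ![0, 0, 1])
      = ((a - b) * b) • (![0, 0, 1] : Fin 3 → K) ∧
    ((a - b) * b) • (![0, 0, 1] : Fin 3 → K) ≠ 0 :=
  example_not_associative_general a b hab hb
end
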